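/- arXiv:2408.05458 — 8 statements merged into one kernel-verified Lean document; each statement's English description precedes it below -/
import Mathlib

section
/- Let K be a field and A, B, C vector spaces over K. Let v ∈ (A ⊗[K] B) ⊗[K] C. Suppose that v = γ ⊗ₜ c for some γ ∈ A ⊗ B and c ∈ C, and that the image of v under the associator isomorphism (A ⊗ B) ⊗ C ≃ A ⊗ (B ⊗ C) equals a ⊗ₜ α for some a ∈ A and α ∈ B ⊗ C. Then there exists b ∈ B with v = (a ⊗ₜ b) ⊗ₜ c. -/
/-!
For `c ≠ 0` pick a functional `φ` with `φ c = 1`. Contracting the last factor with `φ` recovers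
`γ` from `γ ⊗ c`, and the contraction commutes with the associator, where it only acts on the
`B ⊗ C` factor. Hence `γ = a ⊗ b` with `b` the contraction of `α`.
-/

open TensorProduct LinearMap

namespace TensorProduct

variable {R M N P : Type*} [CommSemiring R] [AddCommMonoid M] [Module R M]
  [AddCommMonoid N] [Module R N] [AddCommMonoid P] [Module R P]

theorem rid_comp_lTensor_eq_lTensor_comp_assoc (φ : Module.Dual R P) :
    (TensorProduct.rid R (M ⊗[R] N)).toLinearMap ∘ₗ lTensor (M ⊗[R] N) φ =
      lTensor M ((TensorProduct.rid R N).toLinearMap ∘ₗ lTensor N φ) ∘ₗ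
        (TensorProduct.assoc R M N P).toLinearMap := by
  ext m n p
  simp [smul_tmul']

theorem eq_tmul_of_assoc_tmul_eq_tmul {φ : Module.Dual R P} {γ : M ⊗[R] N} {p : P} {m : M}
    {α : N ⊗[R] P} (hφ : φ p = 1) (h : TensorProduct.assoc R M N P (γ ⊗ₜ p) = m ⊗ₜ α) :
    γ = m ⊗ₜ TensorProduct.rid R N (lTensor N φ α) := by
  simpa [hφ, h] using
    LinearMap.congr_fun (rid_comp_lTensor_eq_lTensor_comp_assoc (M := M) (N := N) φ) (γ ⊗ₜ p)

end TensorProduct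

/-- If a vector of `(A ⊗ B) ⊗ C` is a pure tensor both for the decomposition
`(A ⊗ B) ⊗ C` (with last factor `c`) and, via the associator, for the
decomposition `A ⊗ (B ⊗ C)` (with first factor `a`), then it is a pure tensor
`(a ⊗ b) ⊗ c` for the three-factor decomposition. -/
theorem pure_tensor_of_two_decompositions {K : Type*} [Field K]
    {A B C : Type*} [AddCommGroup A] [Module K A] [AddCommGroup B] [Module K B]
    [AddCommGroup C] [Module K C]
    (v : (A ⊗[K] B) ⊗[K] C) (γ : A ⊗[K] B) (c : C) (a : A) (α : B ⊗[K] C)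
    (h₁ : v = γ ⊗ₜ[K] c)
    (h₂ : TensorProduct.assoc K A B C v = a ⊗ₜ[K] α) :
    ∃ b : B, v = (a ⊗ₜ[K] b) ⊗ₜ[K] c := by
  subst h₁
  rcases eq_or_ne c 0 with rfl | hc
  · exact ⟨0, by simp⟩
  obtain ⟨φ, hφ⟩ := Module.Projective.exists_dual_eq_one K hc
  exact ⟨_, congrArg (· ⊗ₜ[K] c) (eq_tmul_of_assoc_tmul_eq_tmul hφ h₂)⟩
end

section
/- Let D be a type and X, Y, U, V : Finset D. Then the indicator functions satisfy 1_X(p) + 1_Y(p) = 1_U(p) + 1_V(p) for every p ∈ D (equivalently, X + Y = U + V in ℕ[D]) if and only if there exists a subset C ⊆ D (a Finset contained in X ∪ Y ∪ U ∪ V suffices) such that U = (X \ C) ∪ (Y ∩ C) and V = (Y \ C) ∪ (X ∩ C). Moreover, in the forward direction one may take C = (X \ U) ∪ (U \ X). -/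
/-!
A sum of two `0/1` values determines the pair up to order, so the pointwise equation
`1_X(p) + 1_Y(p) = 1_U(p) + 1_V(p)` says that `(p ∈ U, p ∈ V)` is either `(p ∈ X, p ∈ Y)` or
its swap. Exchanging on `C` picks the swap exactly on `C`, and `C = X ∆ U` always works: off it
`U` agrees with `X`, and on it `U` disagrees with `X`, which forces the swap.
-/

theorem ite_add_ite_eq_ite_add_ite_iff (a b c d : Prop) [Decidable a] [Decidable b]
    [Decidable c] [Decidable d] :
    ((if a then 1 else 0) + (if b then 1 else 0) : ℕ) =
        (if c then 1 else 0) + (if d then 1 else 0) ↔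
      ((c ↔ a) ∧ (d ↔ b)) ∨ ((c ↔ b) ∧ (d ↔ a)) := by
  by_cases a <;> by_cases b <;> by_cases c <;> by_cases d <;> simp_all

namespace Finset

variable {D : Type*} [DecidableEq D]

theorem mem_sdiff_union_inter_iff (X Y C : Finset D) (p : D) :
    p ∈ (X \ C) ∪ (Y ∩ C) ↔ if p ∈ C then p ∈ Y else p ∈ X := by
  by_cases hp : p ∈ C <;> simp [hp]

theorem indicator_sum_eq_of_exchange (X Y C : Finset D) (p : D) :
    ((if p ∈ X then 1 else 0) + (if p ∈ Y then 1 else 0) : ℕ) =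
      (if p ∈ (X \ C) ∪ (Y ∩ C) then 1 else 0) + (if p ∈ (Y \ C) ∪ (X ∩ C) then 1 else 0) := by
  rw [ite_add_ite_eq_ite_add_ite_iff, mem_sdiff_union_inter_iff, mem_sdiff_union_inter_iff]
  by_cases hp : p ∈ C <;> simp [hp]

theorem exchange_symmDiff_of_indicator_sum_eq {X Y U V : Finset D}
    (h : ∀ p : D, ((if p ∈ X then 1 else 0) + (if p ∈ Y then 1 else 0) : ℕ)
        = (if p ∈ U then 1 else 0) + (if p ∈ V then 1 else 0)) :
    U = (X \ ((X \ U) ∪ (U \ X))) ∪ (Y ∩ ((X \ U) ∪ (U \ X))) ∧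
      V = (Y \ ((X \ U) ∪ (U \ X))) ∪ (X ∩ ((X \ U) ∪ (U \ X))) := by
  constructor <;> ext p <;>
  · have hp := (ite_add_ite_eq_ite_add_ite_iff _ _ _ _).1 (h p).symm
    rw [mem_sdiff_union_inter_iff]
    simp only [mem_union, mem_sdiff]
    split_ifs <;> tauto

end Finset

open Finset in
/-- The indicator-sum equation `1_X + 1_Y = 1_U + 1_V` in `ℕ[D]` holds iff
`(U, V)` is obtained from `(X, Y)` by exchanging the values on some subset `C`
(which can be taken inside `X ∪ Y ∪ U ∪ V`); moreover in the forward direction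
one may take `C = (X \ U) ∪ (U \ X)`. -/
theorem indicator_sum_eq_iff_exchange {D : Type*} [DecidableEq D]
    (X Y U V : Finset D) :
    (((∀ p : D, ((if p ∈ X then 1 else 0) + (if p ∈ Y then 1 else 0) : ℕ)
          = (if p ∈ U then 1 else 0) + (if p ∈ V then 1 else 0)) ↔
        ∃ C : Finset D, C ⊆ X ∪ Y ∪ U ∪ V ∧
          U = (X \ C) ∪ (Y ∩ C) ∧ V = (Y \ C) ∪ (X ∩ C))) ∧
      ((∀ p : D, ((if p ∈ X then 1 else 0) + (if p ∈ Y then 1 else 0) : ℕ)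
          = (if p ∈ U then 1 else 0) + (if p ∈ V then 1 else 0)) →
        U = (X \ ((X \ U) ∪ (U \ X))) ∪ (Y ∩ ((X \ U) ∪ (U \ X))) ∧
          V = (Y \ ((X \ U) ∪ (U \ X))) ∪ (X ∩ ((X \ U) ∪ (U \ X)))) := by
  have hsub : (X \ U) ∪ (U \ X) ⊆ X ∪ Y ∪ U ∪ V := by
    intro p
    simp only [mem_union, mem_sdiff]
    tauto
  refine ⟨⟨fun h => ⟨_, hsub, exchange_symmDiff_of_indicator_sum_eq h⟩, ?_⟩,
    exchange_symmDiff_of_indicator_sum_eq⟩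
  rintro ⟨C, -, rfl, rfl⟩
  exact indicator_sum_eq_of_exchange X Y C
end

section
/- Let R be a commutative ring, n k : ℕ with k ≤ n, and let S = {i : Fin n | (i : ℕ) < k} (as a Finset) with complement Sᶜ. If φ ∈ MvPolynomial (Fin n) R satisfies rename e φ = φ for every permutation e of Fin n mapping S onto S, then φ belongs to the R-subalgebra of MvPolynomial (Fin n) R generated by the elements e_1(S), …, e_k(S), e_1(Sᶜ), …, e_{n−k}(Sᶜ). -/
/-- The elementary symmetric polynomial `e_l(S) = Σ_{T ⊆ S, #T = l} ∏_{i ∈ T} X_i`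
in the variables of a Finset `S`. -/
noncomputable def esymmOn {σ : Type*} (R : Type*) [CommRing R]
    (S : Finset σ) (l : ℕ) : MvPolynomial σ R :=
  ∑ T ∈ S.powersetCard l, ∏ i ∈ T, MvPolynomial.X i

/-!
Split the variables as `S ⊕ Sᶜ` and view a polynomial as a polynomial in the `S`-variables whose
coefficients are polynomials in the `Sᶜ`-variables (`MvPolynomial.sumAlgEquiv`). Invariance under
the permutations of `Sᶜ` makes every coefficient symmetric, so by the fundamental theorem of
symmetric polynomials the coefficients lie in the subalgebra `B` generated by the `e_j(Sᶜ)`.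
Invariance under the permutations of `S` makes the polynomial symmetric over `B`, and the
fundamental theorem over the base ring `B` writes it as a polynomial in the `e_i(S)` with
coefficients in `B`.
-/

open MvPolynomial Finset

theorem AlgEquiv.apply_mem_adjoin_image_iff {R A B : Type*} [CommSemiring R] [Semiring A]
    [Semiring B] [Algebra R A] [Algebra R B] (e : A ≃ₐ[R] B) {s : Set A} {x : A} :
    e x ∈ Algebra.adjoin R (e '' s) ↔ x ∈ Algebra.adjoin R s := by
  change e x ∈ Algebra.adjoin R ((e : A →ₐ[R] B) '' s) ↔ _
  rw [← AlgHom.map_adjoin, Subalgebra.mem_map]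
  exact ⟨fun ⟨y, hy, hyx⟩ => e.injective hyx ▸ hy, fun hx => ⟨x, hx, rfl⟩⟩

namespace MvPolynomial

section sumAlgEquiv

variable {σ τ R : Type*} [CommSemiring R]

theorem sumAlgEquiv_rename_inl (p : MvPolynomial σ R) :
    sumAlgEquiv R σ τ (rename Sum.inl p) = map C p :=
  DFunLike.congr_fun (sumAlgEquiv_comp_rename_inl R σ τ) p

theorem sumAlgEquiv_rename_inr (p : MvPolynomial τ R) :
    sumAlgEquiv R σ τ (rename Sum.inr p) = C p :=
  DFunLike.congr_fun (sumAlgEquiv_comp_rename_inr R σ τ) p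

theorem sumAlgEquiv_rename_sumMap_left {σ' : Type*} (f : σ → σ') (p : MvPolynomial (σ ⊕ τ) R) :
    sumAlgEquiv R σ' τ (rename (Sum.map f id) p) = rename f (sumAlgEquiv R σ τ p) := by
  have h : (sumAlgEquiv R σ' τ).toAlgHom.comp (rename (Sum.map f id)) =
      ((rename f).restrictScalars R).comp (sumAlgEquiv R σ τ).toAlgHom := by
    ext (i | j) <;> simp
  exact DFunLike.congr_fun h p

theorem sumAlgEquiv_rename_sumMap_right {τ' : Type*} (g : τ → τ') (p : MvPolynomial (σ ⊕ τ) R) :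
    sumAlgEquiv R σ τ' (rename (Sum.map id g) p) =
      map (rename g : MvPolynomial τ R →ₐ[R] _) (sumAlgEquiv R σ τ p) := by
  have h : (sumAlgEquiv R σ τ').toAlgHom.comp (rename (Sum.map id g)) =
      (mapAlgHom (rename g)).comp (sumAlgEquiv R σ τ).toAlgHom := by
    ext (i | j) <;> simp
  exact DFunLike.congr_fun h p

end sumAlgEquiv

variable {σ τ R : Type*} [CommRing R]

theorem rename_esymm_eq_esymmOn {ι : Type*} [Fintype ι] (f : ι ↪ σ) (l : ℕ) :
    rename f (esymm ι R l) = esymmOn R (univ.map f) l := by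
  simp only [esymm, esymmOn, map_sum, map_prod, rename_X, powersetCard_map, sum_map,
    RelEmbedding.coe_toEmbedding, mapEmbedding_apply, prod_map]

variable [Fintype σ] [Fintype τ]

theorem symmetricSubalgebra_eq_adjoin_esymm :
    symmetricSubalgebra σ R =
      Algebra.adjoin R (Set.range fun i : Fin (Fintype.card σ) => esymm σ R (i + 1)) := by
  refine le_antisymm (fun p hp => ?_) (Algebra.adjoin_le ?_)
  · obtain ⟨q, hq⟩ := esymmAlgHom_surjective R le_rfl ⟨p, hp⟩
    rw [← show _ = p from congrArg Subtype.val hq, esymmAlgHom_apply]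
    exact (Algebra.adjoin_range_eq_range_aeval R _).ge ⟨q, rfl⟩
  · rintro _ ⟨i, rfl⟩
    exact esymm_isSymmetric σ R _

theorem IsSymmetric.mem_adjoin_esymm_of_coeff_mem {S : Type*} [CommRing S] [Algebra R S]
    (B : Subalgebra R S) {p : MvPolynomial σ S} (hp : p.IsSymmetric) (hB : ∀ d, coeff d p ∈ B) :
    p ∈ Algebra.adjoin B (Set.range fun i : Fin (Fintype.card σ) => esymm σ S (i + 1)) := by
  obtain ⟨p', rfl⟩ : p ∈ Set.range (MvPolynomial.map (algebraMap B S)) := by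
    rw [mem_range_map_iff_coeffs_subset]
    rintro _ hc
    obtain ⟨d, -, rfl⟩ := mem_coeffs_iff.1 hc
    exact ⟨⟨_, hB d⟩, rfl⟩
  have hp' : p' ∈ symmetricSubalgebra σ B := fun e =>
    map_injective (algebraMap B S) Subtype.val_injective (by rw [map_rename]; exact hp e)
  rw [symmetricSubalgebra_eq_adjoin_esymm] at hp'
  have hmap : MvPolynomial.map (algebraMap B S) p' ∈
      (Algebra.adjoin B (Set.range fun i : Fin (Fintype.card σ) => esymm σ B (i + 1))).map
        (MvPolynomial.mapAlgHom (Algebra.ofId B S)) :=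
    Subalgebra.mem_map.2 ⟨p', hp', rfl⟩
  rw [AlgHom.map_adjoin, ← Set.range_comp] at hmap
  simpa only [Function.comp_def, mapAlgHom_apply, map_esymm] using hmap

theorem mem_adjoin_esymm_sum_of_invariant {ψ : MvPolynomial (σ ⊕ τ) R}
    (hψ : ∀ (e₁ : Equiv.Perm σ) (e₂ : Equiv.Perm τ), rename (Equiv.sumCongr e₁ e₂) ψ = ψ) :
    ψ ∈ Algebra.adjoin R
      (Set.range (fun i : Fin (Fintype.card σ) => rename Sum.inl (esymm σ R (i + 1))) ∪
        Set.range (fun j : Fin (Fintype.card τ) => rename Sum.inr (esymm τ R (j + 1)))) := by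
  set T := sumAlgEquiv R σ τ
  have hsymm : (T ψ).IsSymmetric := fun e => by
    rw [← sumAlgEquiv_rename_sumMap_left]
    exact congrArg T (hψ e 1)
  have hcoeff (d : σ →₀ ℕ) : coeff d (T ψ) ∈
      Algebra.adjoin R (Set.range fun j : Fin (Fintype.card τ) => esymm τ R (j + 1)) := by
    rw [← symmetricSubalgebra_eq_adjoin_esymm]
    intro e
    rw [← AlgHom.coe_toRingHom, ← coeff_map, ← sumAlgEquiv_rename_sumMap_right]
    exact congrArg (coeff d ∘ T) (hψ 1 e)
  have hψT := hsymm.mem_adjoin_esymm_of_coeff_mem _ hcoeff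
  rw [← Subalgebra.mem_restrictScalars R, ← Algebra.adjoin_algebraMap_image_union_eq_adjoin_adjoin,
    Set.union_comm, ← Set.range_comp] at hψT
  rw [← T.apply_mem_adjoin_image_iff, Set.image_union, ← Set.range_comp, ← Set.range_comp]
  simpa only [Function.comp_def, T, sumAlgEquiv_rename_inl, sumAlgEquiv_rename_inr, map_esymm,
    algebraMap_eq] using hψT

theorem mem_adjoin_esymmOn_of_invariant [DecidableEq σ] (S : Finset σ) {φ : MvPolynomial σ R}
    (hφ : ∀ e : Equiv.Perm σ, S.image e = S → rename e φ = φ) :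
    φ ∈ Algebra.adjoin R (Set.range (fun l : Fin #S => esymmOn R S (l + 1)) ∪
      Set.range (fun l : Fin #Sᶜ => esymmOn R Sᶜ (l + 1))) := by
  set ι := Equiv.sumCompl (· ∈ S)
  have hψ (e₁ : Equiv.Perm S) (e₂ : Equiv.Perm {a // a ∉ S}) :
      rename (Equiv.sumCongr e₁ e₂) (rename ι.symm φ) = rename ι.symm φ := by
    have hS : S.image (e₁.subtypeCongr e₂) = S := by
      refine eq_of_subset_of_card_le (fun x hx => ?_)
        (card_image_of_injective _ (Equiv.injective _)).ge
      obtain ⟨a, ha, rfl⟩ := mem_image.1 hx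
      rw [Equiv.Perm.subtypeCongr.left_apply _ _ ha]
      exact (e₁ _).2
    have hcomm : ⇑(Equiv.sumCongr e₁ e₂) ∘ ι.symm = ι.symm ∘ e₁.subtypeCongr e₂ := by
      funext x
      simp [ι, Equiv.Perm.subtypeCongr, Equiv.permCongr_apply]
    rw [rename_rename, hcomm, ← rename_rename, hφ _ hS]
  have hφ' :=
    (renameEquiv R ι).apply_mem_adjoin_image_iff.2 (mem_adjoin_esymm_sum_of_invariant hψ)
  rw [renameEquiv_apply, rename_rename, ι.self_comp_symm, rename_id_apply] at hφ'
  refine Algebra.adjoin_mono ?_ hφ'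
  rintro _ ⟨_, ⟨i, rfl⟩ | ⟨j, rfl⟩, rfl⟩
  · refine Or.inl ⟨Fin.cast (Fintype.card_coe S) i, ?_⟩
    simp only [Fin.val_cast, renameEquiv_apply, rename_rename]
    rw [show ⇑ι ∘ Sum.inl = Function.Embedding.subtype (· ∈ S) from rfl, rename_esymm_eq_esymmOn,
      univ_map_subtype, filter_mem_eq_inter, univ_inter]
  · have hcard : Fintype.card {a // a ∉ S} = #Sᶜ := by
      rw [card_compl, Fintype.card_subtype_compl, Fintype.card_coe]
    refine Or.inr ⟨Fin.cast hcard j, ?_⟩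
    simp only [Fin.val_cast, renameEquiv_apply, rename_rename]
    rw [show ⇑ι ∘ Sum.inr = Function.Embedding.subtype (· ∉ S) from rfl, rename_esymm_eq_esymmOn,
      univ_map_subtype, filter_not, filter_mem_eq_inter, univ_inter, compl_eq_univ_sdiff]

end MvPolynomial

/-- A polynomial invariant under all permutations of `Fin n` mapping
`S = {i | i < k}` onto itself lies in the subalgebra generated by
`e_1(S), …, e_k(S), e_1(Sᶜ), …, e_{n-k}(Sᶜ)`. -/
theorem invariant_mem_adjoin_esymmOn {R : Type*} [CommRing R] {n k : ℕ}
    (hk : k ≤ n) (φ : MvPolynomial (Fin n) R)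
    (hφ : ∀ e : Equiv.Perm (Fin n),
      Finset.image e ({i : Fin n | (i : ℕ) < k} : Finset (Fin n))
          = ({i : Fin n | (i : ℕ) < k} : Finset (Fin n)) →
      MvPolynomial.rename e φ = φ) :
    φ ∈ Algebra.adjoin R
      (Set.range (fun l : Fin k =>
          esymmOn R ({i : Fin n | (i : ℕ) < k} : Finset (Fin n)) ((l : ℕ) + 1)) ∪
        Set.range (fun j : Fin (n - k) =>
          esymmOn R (({i : Fin n | (i : ℕ) < k} : Finset (Fin n))ᶜ) ((j : ℕ) + 1))) := by
  have hS : #({i : Fin n | (i : ℕ) < k} : Finset (Fin n)) = k := by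
    rw [Fin.card_filter_val_lt, min_eq_right hk]
  have hSc : #({i : Fin n | (i : ℕ) < k} : Finset (Fin n))ᶜ = n - k := by
    rw [card_compl, Fintype.card_fin, hS]
  have h := mem_adjoin_esymmOn_of_invariant _ hφ
  rwa [hS, hSc] at h
end

section
/- Let F be a field, n k : ℕ with k ≤ n, and let S = {i : Fin n | (i : ℕ) < k} (as a Finset) with complement Sᶜ. Then the family of n polynomials consisting of e_1(S), …, e_k(S) together with e_1(Sᶜ), …, e_{n−k}(Sᶜ) is algebraically independent over F in MvPolynomial (Fin n) F. -/
/-!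
`e_1(S), …, e_{#S}(S)` is the image under `rename` of the family of elementary symmetric
polynomials in the variables `S`, which is algebraically independent by the fundamental theorem
of symmetric polynomials; likewise for `Sᶜ`. Algebraically independent families in disjoint sets
of variables stay independent together: substituting them into a polynomial in two sets of
variables is the composite of the two one-sided substitutions, each of which is injective.
-/

open MvPolynomial Finset

section

variable {R : Type*} [CommRing R]

theorem AlgebraicIndependent.aeval_of_algebraicIndependent' {κ ι A : Type*} [CommRing A]
    [Algebra R A] {v : κ → A} (hv : AlgebraicIndependent R v) {p : ι → MvPolynomial κ R}
    (hp : AlgebraicIndependent R p) :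
    AlgebraicIndependent R fun i => aeval v (p i) := by
  rw [algebraicIndependent_iff] at hv hp ⊢
  exact fun q hq => hp _ (hv _ (by rwa [← aeval_comp_bind₁, AlgHom.comp_apply] at hq))

/- Through `sumAlgEquiv`, this is `sumElim_comp` for the tower `R → R[τ] → R[τ][σ]`. -/
theorem AlgebraicIndependent.sumElim_X_rename {σ τ ι : Type*} {g : ι → MvPolynomial τ R}
    (hg : AlgebraicIndependent R g) :
    AlgebraicIndependent R (Sum.elim (X ∘ Sum.inl) (rename Sum.inr ∘ g) :
      σ ⊕ ι → MvPolynomial (σ ⊕ τ) R) := by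
  convert (hg.sumElim_comp (algebraicIndependent_X σ (MvPolynomial τ R))).map'
    (f := (sumAlgEquiv R σ τ).symm.toAlgHom) (sumAlgEquiv R σ τ).symm.injective using 1
  ext (s | i) : 1
  · simp
  · change rename Sum.inr (g i) = (sumAlgEquiv R σ τ).symm (C (g i))
    rw [eq_comm, AlgEquiv.symm_apply_eq]
    exact (DFunLike.congr_fun (sumAlgEquiv_comp_rename_inr R σ τ) (g i)).symm

theorem AlgebraicIndependent.sumElim_rename_X {σ τ ι : Type*} {f : ι → MvPolynomial σ R}
    (hf : AlgebraicIndependent R f) :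
    AlgebraicIndependent R (Sum.elim (rename Sum.inl ∘ f) (X ∘ Sum.inr) :
      ι ⊕ τ → MvPolynomial (σ ⊕ τ) R) := by
  convert ((hf.sumElim_X_rename (σ := τ)).map'
    (rename_injective _ (Equiv.sumComm τ σ).injective)).comp
    (Equiv.sumComm ι τ) (Equiv.injective _) using 1
  ext (i | t) : 1
  · simp [rename_rename]; rfl
  · simp

theorem AlgebraicIndependent.sumElim_rename {σ τ ι ι' : Type*} {f : ι → MvPolynomial σ R}
    {g : ι' → MvPolynomial τ R} (hf : AlgebraicIndependent R f) (hg : AlgebraicIndependent R g) :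
    AlgebraicIndependent R (Sum.elim (rename Sum.inl ∘ f) (rename Sum.inr ∘ g) :
      ι ⊕ ι' → MvPolynomial (σ ⊕ τ) R) := by
  convert hf.sumElim_rename_X.aeval_of_algebraicIndependent' hg.sumElim_X_rename using 1
  ext (i | j) : 1
  · simp
  · simp only [Sum.elim_inr, Function.comp_apply]
    rw [aeval_rename, Sum.elim_comp_inr, rename_eq_aeval]

theorem MvPolynomial.algebraicIndependent_esymm {σ : Type*} [Fintype σ] {n : ℕ}
    (h : n ≤ Fintype.card σ) :
    AlgebraicIndependent R (fun l : Fin n => esymm σ R (l + 1)) := by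
  have : aeval (fun l : Fin n => esymm σ R (l + 1)) =
      (Subalgebra.val _).comp (esymmAlgHom σ R n) := by
    ext; simp [esymmAlgHom_apply]
  rw [AlgebraicIndependent, this, AlgHom.coe_comp]
  exact Subtype.val_injective.comp (esymmAlgHom_injective R h)

theorem MvPolynomial.rename_subtypeVal_esymm {σ : Type*} (S : Finset σ) (l : ℕ) :
    rename Subtype.val (esymm S R l) = esymmOn R S l := by
  rw [esymm, map_sum, esymmOn, univ_eq_attach]
  conv_rhs => rw [← S.attach_map_val, powersetCard_map, sum_map]
  refine sum_congr rfl fun T _ => ?_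
  simp [map_prod]

theorem algebraicIndependent_esymmOn_sumElim_of_disjoint {σ : Type*} {S T : Finset σ}
    (hST : Disjoint S T) {k m : ℕ} (hk : k ≤ #S) (hm : m ≤ #T) :
    AlgebraicIndependent R (Sum.elim (fun l : Fin k => esymmOn R S (l + 1))
      (fun l : Fin m => esymmOn R T (l + 1))) := by
  have hval : Function.Injective (Sum.elim Subtype.val Subtype.val : S ⊕ T → σ) :=
    Subtype.val_injective.sumElim Subtype.val_injective
      fun a b hab => disjoint_left.mp hST a.2 (hab ▸ b.2)
  convert ((algebraicIndependent_esymm (R := R) (by simpa using hk)).sumElim_rename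
    (algebraicIndependent_esymm (by simpa using hm))).map' (rename_injective _ hval) using 1
  ext (l | l) : 1 <;> simp [rename_rename, rename_subtypeVal_esymm]

end

/-- With `S = {i : Fin n | i < k}`, the `n` polynomials
`e_1(S), …, e_k(S), e_1(Sᶜ), …, e_{n-k}(Sᶜ)` are algebraically independent. -/
theorem algebraicIndependent_esymmOn_pair {F : Type*} [Field F] {n k : ℕ}
    (hk : k ≤ n) :
    AlgebraicIndependent F (fun i : Fin k ⊕ Fin (n - k) =>
      Sum.elim
        (fun l : Fin k =>
          esymmOn F ({i : Fin n | (i : ℕ) < k} : Finset (Fin n)) ((l : ℕ) + 1))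
        (fun j : Fin (n - k) =>
          esymmOn F (({i : Fin n | (i : ℕ) < k} : Finset (Fin n))ᶜ) ((j : ℕ) + 1))
        i) := by
  have hS : #({i : Fin n | (i : ℕ) < k} : Finset (Fin n)) = k := by
    rw [Fin.card_filter_val_lt, min_eq_right hk]
  exact algebraicIndependent_esymmOn_sumElim_of_disjoint disjoint_compl_right hS.ge
    (by rw [card_compl, Fintype.card_fin, hS])
end

section
/- Let W be a finite type, R a commutative ring, a : W → R, and A, B : Finset W. Then P(A) · P(B) = P(A ∪ B) · P(A ∩ B) · (∏_{l ∈ A \ B} ∏_{j ∈ B \ A} (a l − a j)) · (∏_{l ∈ B \ A} ∏_{j ∈ A \ B} (a l − a j)). -/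
/-!
Both sides are products of factors `a l - a j` over pairs `(l, j)`. Writing each double product
as one product over `W × W` of factors gated by membership conditions, the identity reduces to
checking, for every pair, that `(l, j)` is counted equally often on both sides; this depends only
on whether `l` and `j` lie in `A` and in `B`, so it is a sixteen-case check.
-/

/-- `P S = ∏_{l ∈ S} ∏_{j ∈ W \ S} (a l − a j)`. -/
def eulerP {W : Type*} [Fintype W] [DecidableEq W] {R : Type*} [CommRing R]
    (a : W → R) (S : Finset W) : R :=
  ∏ l ∈ S, ∏ j ∈ Sᶜ, (a l - a j)

open Finset

theorem Finset.prod_prod_eq_prod_ite {W M : Type*} [Fintype W] [DecidableEq W] [CommMonoid M]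
    (f : W → W → M) (S T : Finset W) :
    ∏ l ∈ S, ∏ j ∈ T, f l j = ∏ p : W × W, if p.1 ∈ S ∧ p.2 ∈ T then f p.1 p.2 else 1 := by
  simp [Fintype.prod_prod_type, ite_and, prod_ite_irrel, prod_ite_mem]

theorem Finset.prod_prod_compl_mul_prod_prod_compl {W M : Type*} [Fintype W] [DecidableEq W]
    [CommMonoid M] (f : W → W → M) (A B : Finset W) :
    (∏ l ∈ A, ∏ j ∈ Aᶜ, f l j) * ∏ l ∈ B, ∏ j ∈ Bᶜ, f l j
      = (∏ l ∈ A ∪ B, ∏ j ∈ (A ∪ B)ᶜ, f l j) * (∏ l ∈ A ∩ B, ∏ j ∈ (A ∩ B)ᶜ, f l j)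
          * (∏ l ∈ A \ B, ∏ j ∈ B \ A, f l j) * ∏ l ∈ B \ A, ∏ j ∈ A \ B, f l j := by
  simp only [prod_prod_eq_prod_ite]
  rw [← prod_mul_distrib, ← prod_mul_distrib, ← prod_mul_distrib, ← prod_mul_distrib]
  refine prod_congr rfl fun ⟨l, j⟩ _ => ?_
  by_cases hlA : l ∈ A <;> by_cases hlB : l ∈ B <;> by_cases hjA : j ∈ A <;> by_cases hjB : j ∈ B <;>
    simp [hlA, hlB, hjA, hjB]

/-- `P(A) · P(B) = P(A ∪ B) · P(A ∩ B) · ∏_{A\B × B\A} (a l − a j) ·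
∏_{B\A × A\B} (a l − a j)`. -/
theorem eulerP_mul_eulerP {W : Type*} [Fintype W] [DecidableEq W]
    {R : Type*} [CommRing R] (a : W → R) (A B : Finset W) :
    eulerP a A * eulerP a B
      = eulerP a (A ∪ B) * eulerP a (A ∩ B)
          * (∏ l ∈ A \ B, ∏ j ∈ B \ A, (a l - a j))
          * (∏ l ∈ B \ A, ∏ j ∈ A \ B, (a l - a j)) :=
  prod_prod_compl_mul_prod_prod_compl (fun l j => a l - a j) A B
end

section
/- Let W be a finite type, R a commutative ring, a : W → R, and A, B : Finset W. Then Q(A ∪ B) · Q(A ∩ B) = Q(A) · Q(B) · (∏_{l ∈ A \ B} ∏_{j ∈ B \ A} (a l − a j)) · (∏_{l ∈ B \ A} ∏_{j ∈ A \ B} (a l − a j)). -/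
/-!
Writing `Q S` as the product of `a l - a j` over the off-diagonal of `S × S`, the identity is
inclusion–exclusion for off-diagonals: the off-diagonal of `A ∪ B` is the union of those of `A`
and `B`, which overlap exactly in that of `A ∩ B`, together with the two mixed blocks
`(A \ B) × (B \ A)` and `(B \ A) × (A \ B)`.
-/

/-- `Q S = ∏_{l ∈ S} ∏_{j ∈ S, j ≠ l} (a l − a j)`. -/
def vandermondeQ {W : Type*} {R : Type*} [CommRing R] [DecidableEq W]
    (a : W → R) (S : Finset W) : R :=
  ∏ l ∈ S, ∏ j ∈ S.erase l, (a l - a j)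

namespace Finset

variable {α M : Type*} [DecidableEq α] [CommMonoid M]

theorem prod_offDiag_eq_prod_prod_erase (s : Finset α) (f : α → α → M) :
    ∏ p ∈ s.offDiag, f p.1 p.2 = ∏ i ∈ s, ∏ j ∈ s.erase i, f i j := by
  have hoffDiag : s.offDiag = (s ×ˢ s).filter (fun p => p.1 ≠ p.2) := by grind
  rw [hoffDiag, prod_filter, prod_product]
  refine prod_congr rfl fun i _ => ?_
  rw [← prod_filter, filter_ne]

theorem offDiag_union_eq_offDiag_union_sdiff_product (s t : Finset α) :
    (s ∪ t).offDiag =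
      (s.offDiag ∪ t.offDiag) ∪ ((s \ t) ×ˢ (t \ s) ∪ (t \ s) ×ˢ (s \ t)) := by
  grind

theorem disjoint_offDiag_union_sdiff_product (s t : Finset α) :
    Disjoint (s.offDiag ∪ t.offDiag) ((s \ t) ×ˢ (t \ s) ∪ (t \ s) ×ˢ (s \ t)) := by
  grind [disjoint_left]

theorem disjoint_sdiff_product_sdiff (s t : Finset α) :
    Disjoint ((s \ t) ×ˢ (t \ s)) ((t \ s) ×ˢ (s \ t)) := by
  grind [disjoint_left]

theorem prod_offDiag_union_mul_prod_offDiag_inter (s t : Finset α) (f : α × α → M) :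
    (∏ p ∈ (s ∪ t).offDiag, f p) * ∏ p ∈ (s ∩ t).offDiag, f p =
      (∏ p ∈ s.offDiag, f p) * (∏ p ∈ t.offDiag, f p) *
        (∏ p ∈ (s \ t) ×ˢ (t \ s), f p) * ∏ p ∈ (t \ s) ×ˢ (s \ t), f p := by
  rw [offDiag_union_eq_offDiag_union_sdiff_product,
    prod_union (disjoint_offDiag_union_sdiff_product s t),
    prod_union (disjoint_sdiff_product_sdiff s t), offDiag_inter, mul_right_comm,
    prod_union_inter, mul_assoc _ (∏ p ∈ _ ×ˢ _, f p)]

end Finset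

theorem vandermondeQ_eq_prod_offDiag {W R : Type*} [CommRing R] [DecidableEq W]
    (a : W → R) (S : Finset W) :
    vandermondeQ a S = ∏ p ∈ S.offDiag, (a p.1 - a p.2) :=
  (S.prod_offDiag_eq_prod_prod_erase fun l j => a l - a j).symm

theorem vandermondeQ_union_mul_inter_general {W : Type*} [DecidableEq W]
    {R : Type*} [CommRing R] (a : W → R) (A B : Finset W) :
    vandermondeQ a (A ∪ B) * vandermondeQ a (A ∩ B)
      = vandermondeQ a A * vandermondeQ a B
          * (∏ l ∈ A \ B, ∏ j ∈ B \ A, (a l - a j))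
          * (∏ l ∈ B \ A, ∏ j ∈ A \ B, (a l - a j)) := by
  simp only [vandermondeQ_eq_prod_offDiag, ← Finset.prod_product']
  exact Finset.prod_offDiag_union_mul_prod_offDiag_inter A B _

/-- `Q(A ∪ B) · Q(A ∩ B) = Q(A) · Q(B) · ∏_{A\B × B\A} (a l − a j) ·
∏_{B\A × A\B} (a l − a j)`. -/
theorem vandermondeQ_union_mul_inter {W : Type*} [Fintype W] [DecidableEq W]
    {R : Type*} [CommRing R] (a : W → R) (A B : Finset W) :
    vandermondeQ a (A ∪ B) * vandermondeQ a (A ∩ B)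
      = vandermondeQ a A * vandermondeQ a B
          * (∏ l ∈ A \ B, ∏ j ∈ B \ A, (a l - a j))
          * (∏ l ∈ B \ A, ∏ j ∈ A \ B, (a l - a j)) :=
  vandermondeQ_union_mul_inter_general a A B
end

section
/- Let W be a type and A, B : Finset W. For every l, j ∈ W one has d(χ_A(l) − χ_A(j), χ_B(l) − χ_B(j)) = d(χ_{A∪B}(l) − χ_{A∪B}(j), χ_{A∩B}(l) − χ_{A∩B}(j)) + ε(l,j), where ε(l,j) = 1 if (l ∈ A \ B and j ∈ B \ A) or (l ∈ B \ A and j ∈ A \ B), and ε(l,j) = 0 otherwise. -/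
/-- `d(u, v) = min(|u|, |v|)` if `u` and `v` have strictly opposite signs, and
`0` otherwise. -/
def dExp (u v : ℤ) : ℕ := if u * v < 0 then min u.natAbs v.natAbs else 0

/-- The `ℤ`-valued indicator function of a Finset. -/
def chi {W : Type*} [DecidableEq W] (S : Finset W) (p : W) : ℤ :=
  if p ∈ S then 1 else 0

/-!
The increments `χ_S(l) - χ_S(j)` lie in `{-1, 0, 1}`, so `d` of two of them is `1` when they
have opposite signs and `0` otherwise. For `(A, B)` opposite signs mean that one of `l, j` lies
in `A \ B` and the other in `B \ A`. For the nested pair `A ∩ B ⊆ A ∪ B` they never occur: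
if `l` enters the larger set and `j` does not, then `j` is not in the smaller set either.
-/

lemma dExp_eq_zero_of_mul_nonneg {u v : ℤ} (h : 0 ≤ u * v) : dExp u v = 0 :=
  if_neg h.not_gt

lemma dExp_eq_ite_of_abs_le_one {u v : ℤ} (hu : |u| ≤ 1) (hv : |v| ≤ 1) :
    dExp u v = if u * v < 0 then 1 else 0 := by
  unfold dExp
  split_ifs with h
  · have hu0 : u ≠ 0 := by rintro rfl; simp at h
    have hv0 : v ≠ 0 := by rintro rfl; simp at h
    rw [abs_le] at hu hv
    omega
  · rfl

section Chi

variable {W : Type*} [DecidableEq W]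

lemma abs_chi_sub_chi_le_one (S : Finset W) (l j : W) : |chi S l - chi S j| ≤ 1 := by
  unfold chi; split_ifs <;> norm_num

lemma chi_sub_mul_chi_sub_nonneg_of_subset {S T : Finset W} (h : S ⊆ T) (l j : W) :
    0 ≤ (chi T l - chi T j) * (chi S l - chi S j) := by
  have hl := @h l
  have hj := @h j
  unfold chi
  split_ifs <;> simp_all

lemma chi_sub_mul_chi_sub_neg_iff (A B : Finset W) (l j : W) :
    (chi A l - chi A j) * (chi B l - chi B j) < 0 ↔
      (l ∈ A \ B ∧ j ∈ B \ A) ∨ (l ∈ B \ A ∧ j ∈ A \ B) := by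
  unfold chi
  by_cases hlA : l ∈ A <;> by_cases hlB : l ∈ B <;> by_cases hjA : j ∈ A <;>
    by_cases hjB : j ∈ B <;> simp [hlA, hlB, hjA, hjB]

lemma dExp_chi_sub_chi_of_subset {S T : Finset W} (h : S ⊆ T) (l j : W) :
    dExp (chi T l - chi T j) (chi S l - chi S j) = 0 :=
  dExp_eq_zero_of_mul_nonneg (chi_sub_mul_chi_sub_nonneg_of_subset h l j)

lemma dExp_chi_sub_chi (A B : Finset W) (l j : W) :
    dExp (chi A l - chi A j) (chi B l - chi B j) =
      if (l ∈ A \ B ∧ j ∈ B \ A) ∨ (l ∈ B \ A ∧ j ∈ A \ B) then 1 else 0 := by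
  rw [dExp_eq_ite_of_abs_le_one (abs_chi_sub_chi_le_one A l j) (abs_chi_sub_chi_le_one B l j)]
  exact if_congr (chi_sub_mul_chi_sub_neg_iff A B l j) rfl rfl

end Chi

/-- For each pair `(l, j)`, the exponent `d` for `(A, B)` exceeds the one for
`(A ∪ B, A ∩ B)` by `1` exactly when `(l, j) ∈ (A\B) × (B\A) ∪ (B\A) × (A\B)`. -/
theorem dExp_chi_union_inter {W : Type*} [DecidableEq W] (A B : Finset W)
    (l j : W) :
    dExp (chi A l - chi A j) (chi B l - chi B j)
      = dExp (chi (A ∪ B) l - chi (A ∪ B) j) (chi (A ∩ B) l - chi (A ∩ B) j)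
        + (if (l ∈ A \ B ∧ j ∈ B \ A) ∨ (l ∈ B \ A ∧ j ∈ A \ B) then 1 else 0) := by
  rw [dExp_chi_sub_chi_of_subset Finset.inter_subset_union, zero_add, dExp_chi_sub_chi]
end

section
/- Let I be a finite type, n : I → ℕ, m : I → I → ℕ, F a field, and a : (Σ i : I, Fin (n i)) → F an injective function. For A, B : ∀ i, Finset (Fin (n i)), define componentwise A ∪ B and A ∩ B. Then fc(A, B) · Eu(A ∪ B) · Eu(A ∩ B) · L(A ∪ B) · L(A ∩ B) = fc(A ∪ B, A ∩ B) · Eu(A) · Eu(B) · L(A) · L(B), where fc, Eu, L are defined in the context. -/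
/-- The Coulomb-branch structure constant
`fc(A,B) = ∏_{i,i'} ∏_{l,j} (a(i,l) − a(i',j)) ^ (m i i' · d(χ_{A i} l − χ_{A i'} j, χ_{B i} l − χ_{B i'} j))`
for a quiver with vertex set `I` and `m i i'` arrows from `i` to `i'`. -/
def fcQ {I : Type*} [Fintype I] (n : I → ℕ) (m : I → I → ℕ) {F : Type*} [Field F]
    (a : (Σ i : I, Fin (n i)) → F) (A B : ∀ i, Finset (Fin (n i))) : F :=
  ∏ i : I, ∏ i' : I, ∏ l : Fin (n i), ∏ j : Fin (n i'),
    (a ⟨i, l⟩ - a ⟨i', j⟩) ^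
      (m i i' * dExp (chi (A i) l - chi (A i') j) (chi (B i) l - chi (B i') j))

/-- The equivariant Euler factor
`Eu(A) = ∏_i ∏_{j ∈ A i} ∏_{l ∉ A i} (a(i,j) − a(i,l))`. -/
def euQ {I : Type*} [Fintype I] (n : I → ℕ) {F : Type*} [Field F]
    (a : (Σ i : I, Fin (n i)) → F) (A : ∀ i, Finset (Fin (n i))) : F :=
  ∏ i : I, ∏ j ∈ A i, ∏ l ∈ (A i)ᶜ, (a ⟨i, j⟩ - a ⟨i, l⟩)

/-- The locality factor
`L(A) = ∏_{i ≠ i'} ∏_{l ∈ A i} ∏_{j ∈ A i'} (a(i,l) − a(i',j)) ^ (−m i i') ·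
∏_i ∏_{l ∈ A i} ∏_{j ∈ A i, j ≠ l} (a(i,l) − a(i,j)) ^ (1 − m i i)`
(integer powers taken in the field `F`). -/
def locQ {I : Type*} [Fintype I] [DecidableEq I] (n : I → ℕ) (m : I → I → ℕ)
    {F : Type*} [Field F] (a : (Σ i : I, Fin (n i)) → F)
    (A : ∀ i, Finset (Fin (n i))) : F :=
  (∏ i : I, ∏ i' ∈ Finset.univ.erase i, ∏ l ∈ A i, ∏ j ∈ A i',
      (a ⟨i, l⟩ - a ⟨i', j⟩) ^ (-(m i i' : ℤ))) *
    ∏ i : I, ∏ l ∈ A i, ∏ j ∈ (A i).erase l,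
      (a ⟨i, l⟩ - a ⟨i, j⟩) ^ ((1 : ℤ) - (m i i : ℤ))

/-!
Every factor is a product `∏_{p ≠ q} (a p - a q) ^ e(p, q)` over ordered pairs of distinct basis
vectors `p = ⟨i, l⟩`, `q = ⟨i', j⟩`, with `A` read as the set `S = ⋃ᵢ {i} × A i` of basis vectors.
As `a` is injective, the bases are nonzero, so the identity reduces to one between exponents.
For `p ≠ q`, `Eu(S) · L(S)` contributes `[i = i'] χ_S(p) - m i i' χ_S(p) χ_S(q)`, so the identity
follows from `χ_{A ∪ B} + χ_{A ∩ B} = χ_A + χ_B` and the invariance of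
`d(χ_A p - χ_A q, χ_B p - χ_B q) + χ_A(p) χ_A(q) + χ_B(p) χ_B(q)` under `(A, B) ↦ (A ∪ B, A ∩ B)`.
-/

open Finset Function

section OffDiagProd

variable {α F : Type*} [Fintype α] [Field F]

def offDiagProd (a : α → F) (e : α → α → ℤ) : F :=
  ∏ pq ∈ (univ : Finset α).offDiag, (a pq.1 - a pq.2) ^ e pq.1 pq.2

lemma offDiagProd_mul {a : α → F} (ha : Injective a) (e e' : α → α → ℤ) :
    offDiagProd a e * offDiagProd a e' = offDiagProd a (e + e') := by
  rw [offDiagProd, offDiagProd, offDiagProd, ← prod_mul_distrib]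
  refine prod_congr rfl fun pq hpq => ?_
  rw [Pi.add_apply, Pi.add_apply, zpow_add₀ (sub_ne_zero.2 (ha.ne (mem_offDiag.1 hpq).2.2))]

lemma offDiagProd_eq_prod_prod [DecidableEq α] (a : α → F) {e : α → α → ℤ}
    (he : ∀ p, e p p = 0) :
    offDiagProd a e = ∏ p, ∏ q, (a p - a q) ^ e p q := by
  rw [offDiagProd, ← prod_product' univ univ fun p q => (a p - a q) ^ e p q]
  refine prod_subset (fun pq _ => by simp) fun pq _ hpq => ?_
  obtain ⟨p, q⟩ := pq
  obtain rfl : p = q := by simpa using hpq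
  simp [he]

end OffDiagProd

lemma prod_prod_zpow_eq_of_eq_ite {α β M : Type*} [Fintype α] [Fintype β] [DecidableEq α]
    [DecidableEq β] [DivisionCommMonoid M] (s : Finset α) (t : α → Finset β) (f : α → β → M)
    {e e' : α → β → ℤ} (he : ∀ x y, e x y = if x ∈ s ∧ y ∈ t x then e' x y else 0) :
    ∏ x, ∏ y, f x y ^ e x y = ∏ x ∈ s, ∏ y ∈ t x, f x y ^ e' x y := by
  have h x y : f x y ^ e x y = if x ∈ s then (if y ∈ t x then f x y ^ e' x y else 1) else 1 := by
    rw [he]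
    split_ifs <;> simp_all
  simp only [h, prod_ite_irrel, prod_const_one]
  simp [prod_ite_mem]

lemma prod_sigma_prod_sigma {I : Type*} {β : I → Type*} [Fintype I] [∀ i, Fintype (β i)]
    {M : Type*} [CommMonoid M] (g : (Σ i, β i) → (Σ i, β i) → M) :
    ∏ p, ∏ q, g p q = ∏ i, ∏ i', ∏ l : β i, ∏ j : β i', g ⟨i, l⟩ ⟨i', j⟩ := by
  simp only [Fintype.prod_sigma]
  exact prod_congr rfl fun i _ => prod_comm

lemma prod_prod_eq_prod_mul_prod_erase {I M : Type*} [Fintype I] [DecidableEq I] [CommMonoid M]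
    (g : I → I → M) :
    ∏ i, ∏ i', g i i' = (∏ i, g i i) * ∏ i, ∏ i' ∈ univ.erase i, g i i' := by
  rw [← prod_mul_distrib]
  exact prod_congr rfl fun i _ => (mul_prod_erase univ (g i) (mem_univ i)).symm

lemma Finset.sigma_union {ι : Type*} {σ : ι → Type*} [DecidableEq ι] [∀ i, DecidableEq (σ i)]
    (s : Finset ι) (t₁ t₂ : ∀ i, Finset (σ i)) :
    s.sigma (fun i => t₁ i ∪ t₂ i) = s.sigma t₁ ∪ s.sigma t₂ := by
  ext
  simp [and_or_left]

lemma Finset.sigma_inter {ι : Type*} {σ : ι → Type*} [DecidableEq ι] [∀ i, DecidableEq (σ i)]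
    (s : Finset ι) (t₁ t₂ : ∀ i, Finset (σ i)) :
    s.sigma (fun i => t₁ i ∩ t₂ i) = s.sigma t₁ ∩ s.sigma t₂ := by
  ext
  simp only [mem_sigma, mem_inter]
  tauto

section Chi

variable {α : Type*} [DecidableEq α] (S T : Finset α) (p q : α)

lemma chi_union_add_chi_inter : chi (S ∪ T) p + chi (S ∩ T) p = chi S p + chi T p := by
  by_cases hS : p ∈ S <;> by_cases hT : p ∈ T <;> simp [chi, hS, hT]

lemma dExp_chi_add_chi_mul_chi :
    (dExp (chi S p - chi S q) (chi T p - chi T q) : ℤ) + chi S p * chi S q + chi T p * chi T q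
      = dExp (chi (S ∪ T) p - chi (S ∪ T) q) (chi (S ∩ T) p - chi (S ∩ T) q)
        + chi (S ∪ T) p * chi (S ∪ T) q + chi (S ∩ T) p * chi (S ∩ T) q := by
  by_cases hSp : p ∈ S <;> by_cases hTp : p ∈ T <;> by_cases hSq : q ∈ S <;>
    by_cases hTq : q ∈ T <;> simp [chi, dExp, hSp, hTp, hSq, hTq]

end Chi

section Exponents

variable {I : Type*} [DecidableEq I] {β : I → Type*} [∀ i, DecidableEq (β i)]
  (m : I → I → ℕ) (S T : Finset (Σ i, β i))

def fcExp (p q : Σ i, β i) : ℤ :=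
  (m p.1 q.1 * dExp (chi S p - chi S q) (chi T p - chi T q) : ℕ)

def euExp (p q : Σ i, β i) : ℤ :=
  if p.1 = q.1 ∧ p ∈ S ∧ q ∉ S then 1 else 0

def locExp (p q : Σ i, β i) : ℤ :=
  if p ∈ S ∧ q ∈ S ∧ p ≠ q then (if p.1 = q.1 then 1 else 0) - m p.1 q.1 else 0

@[simp] lemma fcExp_self (p : Σ i, β i) : fcExp m S T p p = 0 := by simp [fcExp, dExp]

@[simp] lemma euExp_self (p : Σ i, β i) : euExp S p p = 0 := by simp [euExp]

@[simp] lemma locExp_self (p : Σ i, β i) : locExp m S p p = 0 := by simp [locExp]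

lemma euExp_add_locExp {p q : Σ i, β i} (hpq : p ≠ q) :
    euExp S p q + locExp m S p q
      = (if p.1 = q.1 then 1 else 0) * chi S p - m p.1 q.1 * (chi S p * chi S q) := by
  by_cases hp : p ∈ S <;> by_cases hq : q ∈ S <;> by_cases h : p.1 = q.1 <;>
    simp [euExp, locExp, chi, hp, hq, h, hpq]

lemma fcExp_add_euExp_add_locExp :
    fcExp m S T + euExp (S ∪ T) + euExp (S ∩ T) + locExp m (S ∪ T) + locExp m (S ∩ T)
      = fcExp m (S ∪ T) (S ∩ T) + euExp S + euExp T + locExp m S + locExp m T := by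
  ext p q
  by_cases hpq : p = q
  · subst hpq
    simp
  simp only [Pi.add_apply, fcExp]
  push_cast
  linear_combination euExp_add_locExp m (S ∪ T) hpq + euExp_add_locExp m (S ∩ T) hpq
    - euExp_add_locExp m S hpq - euExp_add_locExp m T hpq
    + (m p.1 q.1 : ℤ) * dExp_chi_add_chi_mul_chi S T p q
    + (if p.1 = q.1 then (1 : ℤ) else 0) * chi_union_add_chi_inter S T p

end Exponents

section Factors

variable {I : Type*} [Fintype I] [DecidableEq I] {n : I → ℕ} (m : I → I → ℕ)
  {F : Type*} [Field F] (a : (Σ i, Fin (n i)) → F) (A B : ∀ i, Finset (Fin (n i)))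

lemma chi_univ_sigma (i : I) (l : Fin (n i)) : chi (univ.sigma A) ⟨i, l⟩ = chi (A i) l := by
  simp [chi]

lemma fcQ_eq_offDiagProd :
    fcQ n m a A B = offDiagProd a (fcExp m (univ.sigma A) (univ.sigma B)) := by
  rw [offDiagProd_eq_prod_prod a (fcExp_self m _ _), prod_sigma_prod_sigma]
  simp only [fcExp, zpow_natCast, chi_univ_sigma]
  rfl

lemma euQ_eq_offDiagProd : euQ n a A = offDiagProd a (euExp (univ.sigma A)) := by
  rw [offDiagProd_eq_prod_prod a (euExp_self _), prod_sigma_prod_sigma,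
    prod_prod_eq_prod_mul_prod_erase]
  have hoff : ∏ i, ∏ i' ∈ univ.erase i, ∏ l, ∏ j,
      (a ⟨i, l⟩ - a ⟨i', j⟩) ^ euExp (univ.sigma A) ⟨i, l⟩ ⟨i', j⟩ = 1 :=
    prod_eq_one fun i _ => prod_eq_one fun i' hi' => prod_eq_one fun l _ => prod_eq_one fun j _ => by
      simp [euExp, (ne_of_mem_erase hi').symm]
  rw [hoff, mul_one, euQ]
  refine prod_congr rfl fun i _ => ?_
  rw [prod_prod_zpow_eq_of_eq_ite (A i) (fun _ => (A i)ᶜ) _ (e' := fun _ _ => 1)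
    fun l j => by simp [euExp]]
  simp only [zpow_one]

lemma locQ_eq_offDiagProd : locQ n m a A = offDiagProd a (locExp m (univ.sigma A)) := by
  rw [locQ, mul_comm, offDiagProd_eq_prod_prod a (locExp_self m _), prod_sigma_prod_sigma,
    prod_prod_eq_prod_mul_prod_erase]
  congr 1
  · refine prod_congr rfl fun i _ => ?_
    rw [prod_prod_zpow_eq_of_eq_ite (A i) (fun l => (A i).erase l) _ fun l j => ?_]
    simp [locExp, and_comm, eq_comm]
  · refine prod_congr rfl fun i _ => prod_congr rfl fun i' hi' => ?_
    rw [prod_prod_zpow_eq_of_eq_ite (A i) (fun _ => A i') _ fun l j => ?_]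
    simp [locExp, (ne_of_mem_erase hi').symm]

end Factors

/-- The key identity matching, for an arbitrary quiver, the structure constants
of the Coulomb-branch Rees algebra (`fc` and the Euler factors `Eu`) with the
locality factors `L` of the Mirković local projective space:
`fc(A,B) · Eu(A∪B) · Eu(A∩B) · L(A∪B) · L(A∩B)
  = fc(A∪B, A∩B) · Eu(A) · Eu(B) · L(A) · L(B)`. -/
theorem fc_eu_loc_union_inter {I : Type*} [Fintype I] [DecidableEq I]
    (n : I → ℕ) (m : I → I → ℕ) {F : Type*} [Field F]
    (a : (Σ i : I, Fin (n i)) → F) (ha : Function.Injective a)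
    (A B : ∀ i, Finset (Fin (n i))) :
    fcQ n m a A B * euQ n a (fun i => A i ∪ B i) * euQ n a (fun i => A i ∩ B i)
        * locQ n m a (fun i => A i ∪ B i) * locQ n m a (fun i => A i ∩ B i)
      = fcQ n m a (fun i => A i ∪ B i) (fun i => A i ∩ B i)
          * euQ n a A * euQ n a B * locQ n m a A * locQ n m a B := by
  simp only [fcQ_eq_offDiagProd, euQ_eq_offDiagProd, locQ_eq_offDiagProd, sigma_union,
    sigma_inter, offDiagProd_mul ha]
  rw [fcExp_add_euExp_add_locExp]
end
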